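/- arXiv:2011.09412 — 4 statements merged into one kernel-verified Lean document; each statement's English description precedes it below -/
import Mathlib

section
/- Let $H_A$, $H_B$ be finitely generated free $\mathbb{Z}$-modules and $\Phi : H_A \otimes \widehat{\mathbb{Z}} \to H_B \otimes \widehat{\mathbb{Z}}$ a $\widehat{\mathbb{Z}}$-linear map whose matrix coefficient module $\mathrm{MC}(\Phi; H_A, H_B)$ has $\mathbb{Z}$-rank $1$. Then for each generator $z \in \widehat{\mathbb{Z}}$ of $\mathrm{MC}(\Phi; H_A, H_B)$ there exists a unique $\mathbb{Z}$-linear map $F_z : H_A \to H_B$ such that $\Phi$ equals the scalar $z$ times the $\widehat{\mathbb{Z}}$-linear extension of $F_z$; moreover $F_{-z} = -F_z$. -/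
/-- Compatibility condition defining the profinite integers as the inverse limit
of the rings `ZMod (n+1)` under the reduction maps. -/
def ZHatCompat (f : ∀ n : ℕ, ZMod (n + 1)) : Prop :=
  ∀ (m n : ℕ) (h : (m + 1) ∣ (n + 1)), ZMod.castHom h (ZMod (m + 1)) (f n) = f m

/-- The ring of profinite integers `ẑ`, realized as a subring of `∏ₙ ZMod (n+1)`. -/
def ZHat : Subring (∀ n : ℕ, ZMod (n + 1)) where
  carrier := {f | ZHatCompat f}
  zero_mem' := by intro m n h; simp only [Pi.zero_apply, map_zero]
  one_mem' := by intro m n h; simp only [Pi.one_apply, map_one]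
  add_mem' := by
    intro a b ha hb m n h
    have ha' := (ha : ZHatCompat a) m n h
    have hb' := (hb : ZHatCompat b) m n h
    simp only [Pi.add_apply, map_add, ha', hb']
  mul_mem' := by
    intro a b ha hb m n h
    have ha' := (ha : ZHatCompat a) m n h
    have hb' := (hb : ZHatCompat b) m n h
    simp only [Pi.mul_apply, map_mul, ha', hb']
  neg_mem' := by
    intro a ha m n h
    have ha' := (ha : ZHatCompat a) m n h
    simp only [Pi.neg_apply, map_neg, ha']

/-!
Since `ẑ` is torsion-free and `H_B` is flat over `ℤ`, tensoring the injection `n ↦ n z` with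
`H_B` shows that `w ↦ z ⊗ w` embeds `H_B` into `ẑ ⊗ H_B` whenever `z ≠ 0`. As `MC = ℤ z`, every
`Φ (1 ⊗ u)` lies in `z ⊗ H_B`, so `F_z` is `Φ (1 ⊗ ·)` followed by the inverse of that embedding;
a `ẑ`-linear map on `ẑ ⊗ H_A` is determined by its values on `1 ⊗ H_A`, which gives both
`Φ = z • (F_z ⊗ ẑ)` and uniqueness, and uniqueness gives `F_{-z} = -F_z`.
-/

theorem ZMod.cast_eq_zero_of_natCast_mul_eq_zero {m n N : ℕ} [NeZero m] (hn : n ≠ 0)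
    (hN : N = n * m) {x : ZMod N} (hx : (n : ZMod N) * x = 0) : (x.cast : ZMod m) = 0 := by
  subst hN
  have : NeZero (n * m) := ⟨mul_ne_zero hn (NeZero.ne m)⟩
  rw [ZMod.cast_eq_val, ZMod.natCast_eq_zero_iff]
  rw [← ZMod.natCast_zmod_val x, ← Nat.cast_mul, ZMod.natCast_eq_zero_iff] at hx
  exact Nat.dvd_of_mul_dvd_mul_left (Nat.pos_of_ne_zero hn) hx

theorem ZHat.eq_zero_of_nsmul_eq_zero {n : ℕ} (hn : n ≠ 0) {f : ZHat} (h : n • f = 0) :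
    f = 0 := by
  ext m
  -- `f m` is the reduction of the coordinate at level `n (m + 1)`, which `n` annihilates.
  obtain ⟨k, hk⟩ : ∃ k, k + 1 = n * (m + 1) :=
    ⟨n * (m + 1) - 1, Nat.sub_add_cancel (Nat.mul_pos (Nat.pos_of_ne_zero hn) m.succ_pos)⟩
  have hcoord : (n : ZMod (k + 1)) * f.1 k = 0 := by
    simpa [nsmul_eq_mul] using congrFun (congrArg Subtype.val h) k
  rw [← f.2 m k (hk ▸ dvd_mul_left _ _), ZMod.castHom_apply]
  exact ZMod.cast_eq_zero_of_natCast_mul_eq_zero hn hk hcoord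

instance : IsAddTorsionFree ZHat where
  nsmul_right_injective _ hn f g h :=
    sub_eq_zero.1 <| ZHat.eq_zero_of_nsmul_eq_zero hn <| by rw [nsmul_sub, sub_eq_zero.2 h]

open TensorProduct

theorem TensorProduct.tmul_injective_of_smul_left_injective {R A N : Type*} [CommRing R]
    [AddCommGroup A] [Module R A] [AddCommGroup N] [Module R N] [Module.Flat R N] {z : A}
    (hz : Function.Injective fun r : R => r • z) :
    Function.Injective (z ⊗ₜ[R] · : N → A ⊗[R] N) := by
  have hmul : Function.Injective ((LinearMap.toSpanSingleton R A z).rTensor N) :=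
    Module.Flat.rTensor_preserves_injective_linearMap _ hz
  convert hmul.comp (TensorProduct.lid R N).symm.injective using 1
  ext w
  simp

theorem TensorProduct.exists_eq_tmul_of_mem_range_map_span_singleton {R A N : Type*}
    [CommSemiring R] [AddCommMonoid A] [Module R A] [AddCommMonoid N] [Module R N] {z : A}
    {x : A ⊗[R] N} (hx : x ∈ LinearMap.range (map (R ∙ z).subtype (LinearMap.id : N →ₗ[R] N))) :
    ∃ w, x = z ⊗ₜ[R] w := by
  obtain ⟨y, rfl⟩ := hx
  induction y using TensorProduct.induction_on with
  | zero => exact ⟨0, by simp⟩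
  | tmul l w =>
    obtain ⟨a, ha⟩ := Submodule.mem_span_singleton.1 l.2
    exact ⟨a • w, by simp [← ha, smul_tmul]⟩
  | add y₁ y₂ ih₁ ih₂ =>
    obtain ⟨w₁, hw₁⟩ := ih₁
    obtain ⟨w₂, hw₂⟩ := ih₂
    exact ⟨w₁ + w₂, by rw [map_add, hw₁, hw₂, tmul_add]⟩

namespace LinearMap

variable {R A M N : Type*} [CommSemiring R] [CommSemiring A] [Algebra R A]
  [AddCommMonoid M] [Module R M] [AddCommMonoid N] [Module R N]
  (Φ : A ⊗[R] M →ₗ[A] A ⊗[R] N) {z : A}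

theorem eq_smul_baseChange_iff (F : M →ₗ[R] N) :
    Φ = z • F.baseChange A ↔ ∀ u, Φ (1 ⊗ₜ u) = z ⊗ₜ F u := by
  constructor
  · rintro rfl u
    simp [smul_tmul']
  · intro h
    ext u
    simp [h, smul_tmul']

theorem existsUnique_eq_smul_baseChange (hz : Function.Injective (z ⊗ₜ[R] · : N → A ⊗[R] N))
    (hΦ : ∀ u, ∃ w, Φ (1 ⊗ₜ u) = z ⊗ₜ w) : ∃! F : M →ₗ[R] N, Φ = z • F.baseChange A := by
  let ι := TensorProduct.mk R A N z
  let ψ := Φ.restrictScalars R ∘ₗ TensorProduct.mk R A M 1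
  have hψ : ∀ u, ψ u ∈ range ι := fun u => (hΦ u).imp fun w hw => hw.symm
  let F := (LinearEquiv.ofInjective ι hz).symm.toLinearMap ∘ₗ ψ.codRestrict _ hψ
  have hF : ∀ u, Φ (1 ⊗ₜ u) = z ⊗ₜ F u := fun u =>
    (LinearEquiv.ofInjective_symm_apply (f := ι) (h := hz) (⟨ψ u, hψ u⟩ : range ι)).symm
  refine ⟨F, (eq_smul_baseChange_iff Φ F).2 hF, fun G hG => ?_⟩
  ext u
  exact hz (((eq_smul_baseChange_iff Φ G).1 hG u).symm.trans (hF u))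

end LinearMap

set_option synthInstance.maxHeartbeats 1000000 in
set_option maxHeartbeats 1000000 in
open TensorProduct in
theorem rank_one_matrix_coefficient_module_general
    (HA HB : Type) [AddCommGroup HA] [AddCommGroup HB] [Module ℤ HA] [Module ℤ HB]
    [Module.Free ℤ HB]
    (Φ : (ZHat ⊗[ℤ] HA) →ₗ[ZHat] (ZHat ⊗[ℤ] HB))
    (MCmod : Submodule ℤ ZHat)
    (hMC : IsLeast {L : Submodule ℤ ZHat |
        ∀ u : HA, Φ ((1 : ZHat) ⊗ₜ[ℤ] u) ∈
          LinearMap.range (TensorProduct.map L.subtype (LinearMap.id : HB →ₗ[ℤ] HB))} MCmod)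
    (hrank : Module.rank ℤ MCmod = 1) :
    ∀ z : ZHat, MCmod = Submodule.span ℤ {z} →
      (∃! F : HA →ₗ[ℤ] HB, Φ = z • (LinearMap.baseChange ZHat F)) ∧
      (∀ F F' : HA →ₗ[ℤ] HB, Φ = z • (LinearMap.baseChange ZHat F) →
        Φ = (-z) • (LinearMap.baseChange ZHat F') → F' = -F) := by
  intro z hz
  have hz0 : z ≠ 0 := by
    rintro rfl
    rw [hz, Submodule.span_zero_singleton, rank_bot] at hrank
    exact zero_ne_one hrank
  have hΦ (u : HA) : ∃ w, Φ (1 ⊗ₜ u) = z ⊗ₜ w :=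
    exists_eq_tmul_of_mem_range_map_span_singleton (hz ▸ hMC.1 u)
  obtain ⟨F, hF, huniq⟩ := Φ.existsUnique_eq_smul_baseChange
    (tmul_injective_of_smul_left_injective (smul_left_injective ℤ hz0)) hΦ
  refine ⟨⟨F, hF, huniq⟩, fun F₁ F₂ h₁ h₂ => ?_⟩
  have hneg : -F₂ = F₁ :=
    (huniq _ <| h₂.trans <| by ext; simp).trans (huniq _ h₁).symm
  rw [← hneg, neg_neg]

set_option synthInstance.maxHeartbeats 1000000 in
set_option maxHeartbeats 1000000 in
open TensorProduct in
/-- If the matrix coefficient module `MC(Φ; H_A, H_B)` (the smallest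
`ℤ`-submodule `L ⊆ ẑ` with `Φ(H_A ⊗ 1) ⊆ H_B ⊗ L`) has `ℤ`-rank `1`, then for each
generator `z` of it there is a unique `ℤ`-linear `F_z : H_A → H_B` with
`Φ = z • (F_z ⊗ ẑ)`; moreover `F_{-z} = -F_z`. -/
theorem rank_one_matrix_coefficient_module
    (HA HB : Type) [AddCommGroup HA] [AddCommGroup HB] [Module ℤ HA] [Module ℤ HB]
    [Module.Free ℤ HA] [Module.Finite ℤ HA] [Module.Free ℤ HB] [Module.Finite ℤ HB]
    (Φ : (ZHat ⊗[ℤ] HA) →ₗ[ZHat] (ZHat ⊗[ℤ] HB))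
    (MCmod : Submodule ℤ ZHat)
    (hMC : IsLeast {L : Submodule ℤ ZHat |
        ∀ u : HA, Φ ((1 : ZHat) ⊗ₜ[ℤ] u) ∈
          LinearMap.range (TensorProduct.map L.subtype (LinearMap.id : HB →ₗ[ℤ] HB))} MCmod)
    (hrank : Module.rank ℤ MCmod = 1) :
    ∀ z : ZHat, MCmod = Submodule.span ℤ {z} →
      (∃! F : HA →ₗ[ℤ] HB, Φ = z • (LinearMap.baseChange ZHat F)) ∧
      (∀ F F' : HA →ₗ[ℤ] HB, Φ = z • (LinearMap.baseChange ZHat F) →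
        Φ = (-z) • (LinearMap.baseChange ZHat F') → F' = -F) :=
  rank_one_matrix_coefficient_module_general HA HB Φ MCmod hMC hrank
end

section
/- Let $S$ be a commutative domain, let $P$ be an $m \times n$ matrix over $S$, and suppose there exist an $n \times m$ matrix $Q$ over $S$ and a nonzero $a \in S$ with $PQP = aP$. Let $\widehat{R}$ be a commutative topological ring containing $S$ as a dense subring, with $\widehat{R}$ Hausdorff and with continuous ring operations. Then for every $X \in \widehat{R}^n$ with $PX = 0$, the vector $aX$ lies in the closure of $\{Y \in S^n : PY = 0\}$ in $\widehat{R}^n$. -/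
/-! If `P Q P = a P`, the map `Y ↦ a Y - Q P Y` sends every vector into `ker P` and acts as
multiplication by `a` on `ker P`. Its extension to `R̂ⁿ` is continuous, so it carries the dense
set `Sⁿ` into the closure of the `S`-points of `ker P`; applied to `X ∈ ker P` it gives `a X`. -/

open Matrix

namespace Matrix

variable {R : Type*} [CommRing R] {m n : Type*} [Fintype m] [Fintype n]

theorem mulVec_smul_sub_mulVec_mulVec_eq_zero {P : Matrix m n R} {Q : Matrix n m R} {a : R}
    (hPQP : P * Q * P = a • P) (Y : n → R) : P *ᵥ (a • Y - Q *ᵥ (P *ᵥ Y)) = 0 := by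
  rw [mulVec_sub, mulVec_smul, mulVec_mulVec, mulVec_mulVec, hPQP, smul_mulVec, sub_self]

end Matrix

theorem RingHom.comp_smul_sub_mulVec_mulVec {R T : Type*} [CommRing R] [CommRing T]
    {m n : Type*} [Fintype m] [Fintype n] (ι : R →+* T) (P : Matrix m n R)
    (Q : Matrix n m R) (a : R) (Y : n → R) :
    ι ∘ (a • Y - Q *ᵥ (P *ᵥ Y)) = ι a • (ι ∘ Y) - Q.map ι *ᵥ (P.map ι *ᵥ (ι ∘ Y)) := by
  ext i
  simp [RingHom.map_mulVec]

theorem smul_kernel_vector_mem_closure_general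
    (S : Type) [CommRing S] (m n : ℕ)
    (P : Matrix (Fin m) (Fin n) S) (Q : Matrix (Fin n) (Fin m) S) (a : S)
    (hPQP : P * Q * P = a • P)
    (Rhat : Type) [CommRing Rhat] [TopologicalSpace Rhat] [IsTopologicalRing Rhat]
    (ι : S →+* Rhat) (hdense : DenseRange ι) :
    ∀ X : Fin n → Rhat, (P.map (fun s => ι s)).mulVec X = 0 →
      (fun i => ι a * X i) ∈
        closure {Z : Fin n → Rhat |
          ∃ Y : Fin n → S, P.mulVec Y = 0 ∧ Z = fun i => ι (Y i)} := by
  intro X hX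
  let f : (Fin n → Rhat) → (Fin n → Rhat) := fun W => ι a • W - Q.map ι *ᵥ (P.map ι *ᵥ W)
  have hf : Continuous f := by fun_prop
  have hfX : f X = ι a • X := by
    simp only [f, hX, mulVec_zero, sub_zero]
  have hSn : X ∈ closure (Set.range (Pi.map fun _ => ι)) :=
    DenseRange.piMap (fun _ => hdense) X
  rw [show (fun i => ι a * X i) = f X from hfX.symm]
  refine map_mem_closure hf hSn ?_
  rintro _ ⟨Y, rfl⟩
  exact ⟨a • Y - Q *ᵥ (P *ᵥ Y), mulVec_smul_sub_mulVec_mulVec_eq_zero hPQP Y,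
    (ι.comp_smul_sub_mulVec_mulVec P Q a Y).symm⟩

/-- Let `S` be a commutative domain, `P` an `m × n` matrix over `S`,
and suppose `P Q P = a P` with `a ≠ 0`.  Let `R̂` be a Hausdorff commutative topological
ring containing `S` as a dense subring.  Then for every `X ∈ R̂ⁿ` with `P X = 0`, the
vector `a X` lies in the closure of the set of kernel vectors of `P` with entries in `S`. -/
theorem smul_kernel_vector_mem_closure
    (S : Type) [CommRing S] [IsDomain S] (m n : ℕ)
    (P : Matrix (Fin m) (Fin n) S) (Q : Matrix (Fin n) (Fin m) S) (a : S)
    (ha : a ≠ 0) (hPQP : P * Q * P = a • P)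
    (Rhat : Type) [CommRing Rhat] [TopologicalSpace Rhat] [IsTopologicalRing Rhat]
    [T2Space Rhat]
    (ι : S →+* Rhat) (hinj : Function.Injective ι) (hdense : DenseRange ι) :
    ∀ X : Fin n → Rhat, (P.map (fun s => ι s)).mulVec X = 0 →
      (fun i => ι a * X i) ∈
        closure {Z : Fin n → Rhat |
          ∃ Y : Fin n → S, P.mulVec Y = 0 ∧ Z = fun i => ι (Y i)} :=
  smul_kernel_vector_mem_closure_general S m n P Q a hPQP Rhat ι hdense
end

section
/- Let $D$ be a compact convex polytope with nonempty interior in real affine $n$-space $\mathbf{A}^n \subseteq \mathbf{P}^n$, and let $q$ be an interior point of $D$. If a projective linear automorphism $\tau$ of $\mathbf{P}^n$ fixes every vertex of $D$ and fixes $q$, then $\tau$ is the identity. -/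
open scoped LinearAlgebra.Projectivization

/-- The standard affine chart embedding `ℝⁿ → ℝPⁿ`, `x ↦ [(1, x)]`. -/
noncomputable def projEmb (n : ℕ) (x : Fin n → ℝ) : ℙ ℝ (Fin (n + 1) → ℝ) :=
  Projectivization.mk ℝ (Fin.cons (1 : ℝ) x : Fin (n + 1) → ℝ)
    (fun h => by
      have h0 := congrFun h 0
      simp [Fin.cons_zero] at h0)

open Topology

/-!
Lift each vertex `v` of `D` to `(1, v) ∈ ℝⁿ⁺¹`. A representative `g` of `τ` scales each lifted
vertex by some `c_v` and the lift of `q` by some `μ`. Writing `q` as a convex combination of the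
vertices with strictly positive weights `t_v` gives `∑ t_v (c_v - μ) (1, v) = 0`; the first
coordinate of this relation, before and after applying `g`, yields `∑ t_v (c_v - μ)² = 0`, so all
`c_v = μ`. As `D` has nonempty interior, the lifted vertices span `ℝⁿ⁺¹`, hence `g = μ • id`.
-/

theorem Set.Finite.convexHull_extremePoints_convexHull {E : Type*} [AddCommGroup E]
    [Module ℝ E] [TopologicalSpace E] [T2Space E] [IsTopologicalAddGroup E] [ContinuousSMul ℝ E]
    [LocallyConvexSpace ℝ E] {s : Set E} (hs : s.Finite) :
    convexHull ℝ ((convexHull ℝ s).extremePoints ℝ) = convexHull ℝ s := by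
  have hfin : ((convexHull ℝ s).extremePoints ℝ).Finite :=
    hs.subset extremePoints_convexHull_subset
  simpa [(hfin.isClosed_convexHull (𝕜 := ℝ)).closure_eq] using
    closure_convexHull_extremePoints (hs.isCompact_convexHull (𝕜 := ℝ)) (convex_convexHull ℝ s)

theorem exists_pos_weights_of_mem_interior_convexHull {E : Type*} [AddCommGroup E] [Module ℝ E]
    [TopologicalSpace E] [IsTopologicalAddGroup E] [ContinuousSMul ℝ E] {s : Finset E} {q : E}
    (hq : q ∈ interior (convexHull ℝ (s : Set E))) :
    ∃ t : E → ℝ, (∀ v ∈ s, 0 < t v) ∧ ∑ v ∈ s, t v = 1 ∧ ∑ v ∈ s, t v • v = q := by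
  have hs : s.Nonempty := by
    rw [Finset.nonempty_iff_ne_empty]
    rintro rfl
    simp at hq
  set m : ℝ := (s.card : ℝ)
  have hm : 0 < m := Nat.cast_pos.2 hs.card_pos
  set b : E := ∑ v ∈ s, m⁻¹ • v
  -- `q` lies in the open segment between the centroid `b` and a point `q + δ • (q - b)` of the hull
  have hnear : ∀ᶠ δ : ℝ in 𝓝 0, q + δ • (q - b) ∈ convexHull ℝ (s : Set E) := by
    have hcont : Continuous fun δ : ℝ => q + δ • (q - b) := by fun_prop
    have := hcont.tendsto 0
    simp only [zero_smul, add_zero] at this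
    exact this.eventually (mem_interior_iff_mem_nhds.1 hq)
  obtain ⟨δ, hδK, hδ⟩ := ((hnear.filter_mono nhdsWithin_le_nhds).and
    (self_mem_nhdsWithin : Set.Ioi (0 : ℝ) ∈ 𝓝[>] 0)).exists
  obtain ⟨w, hw0, hw1, hwq⟩ := Finset.mem_convexHull'.1 hδK
  have hδ' : (1 + δ : ℝ) ≠ 0 := by positivity
  refine ⟨fun v => (w v + δ / m) / (1 + δ), fun v hv => by have := hw0 v hv; positivity, ?_, ?_⟩
  · rw [← Finset.sum_div, Finset.sum_add_distrib, hw1, Finset.sum_const, nsmul_eq_mul,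
      mul_div_cancel₀ _ hm.ne', div_self hδ']
  · calc ∑ v ∈ s, ((w v + δ / m) / (1 + δ)) • v
        = (1 + δ)⁻¹ • (∑ v ∈ s, w v • v + δ • b) := by
          simp only [b, Finset.smul_sum, ← Finset.sum_add_distrib, smul_smul, ← add_smul]
          exact Finset.sum_congr rfl fun v _ => by congr 1; field_simp
      _ = (1 + δ)⁻¹ • ((1 + δ) • q) := by rw [hwq]; congr 1; module
      _ = q := by rw [smul_smul, inv_mul_cancel₀ hδ', one_smul]

theorem Projectivization.map_mk_eq_mk_iff {K V : Type*} [Field K] [AddCommGroup V] [Module K V]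
    (f : V →ₗ[K] V) (hf : Function.Injective f) (v : V) (hv : v ≠ 0) :
    Projectivization.map f hf (Projectivization.mk K v hv) = Projectivization.mk K v hv ↔
      ∃ a : K, f v = a • v := by
  rw [Projectivization.map_mk, Projectivization.mk_eq_mk_iff']
  simp only [eq_comm]

theorem eq_smul_of_pos_sum_eq_smul {𝕜 M ι : Type*} [Field 𝕜] [LinearOrder 𝕜]
    [IsStrictOrderedRing 𝕜] [AddCommGroup M] [Module 𝕜 M] (f : Module.End 𝕜 M) (φ : M →ₗ[𝕜] 𝕜)
    {s : Finset ι} {x : ι → M} {t : ι → 𝕜} {μ : 𝕜} (hφ : ∀ i ∈ s, φ (x i) = 1)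
    (hx : ∀ i ∈ s, ∃ c : 𝕜, f (x i) = c • x i) (ht : ∀ i ∈ s, 0 < t i)
    (hμ : f (∑ i ∈ s, t i • x i) = μ • ∑ i ∈ s, t i • x i) :
    ∀ i ∈ s, f (x i) = μ • x i := by
  choose! c hc using hx
  have hf (a : ι → 𝕜) : f (∑ i ∈ s, a i • x i) = ∑ i ∈ s, (a i * c i) • x i := by
    simp only [map_sum, map_smul]
    exact Finset.sum_congr rfl fun i hi => by rw [hc i hi, smul_smul]
  have hφsum (a : ι → 𝕜) : φ (∑ i ∈ s, a i • x i) = ∑ i ∈ s, a i := by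
    simp only [map_sum, map_smul, smul_eq_mul]
    exact Finset.sum_congr rfl fun i hi => by rw [hφ i hi, mul_one]
  have hzero : ∑ i ∈ s, (t i * (c i - μ)) • x i = 0 := by
    rw [hf, Finset.smul_sum] at hμ
    simp only [mul_sub, sub_smul, Finset.sum_sub_distrib, hμ, smul_smul, mul_comm μ, sub_self]
  have h₁ : ∑ i ∈ s, t i * (c i - μ) = 0 := by rw [← hφsum, hzero, map_zero]
  have h₂ : ∑ i ∈ s, t i * (c i - μ) * c i = 0 := by rw [← hφsum, ← hf, hzero, map_zero, map_zero]
  have hsq : ∑ i ∈ s, t i * (c i - μ) ^ 2 = 0 := by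
    calc ∑ i ∈ s, t i * (c i - μ) ^ 2
        = ∑ i ∈ s, t i * (c i - μ) * c i - μ * ∑ i ∈ s, t i * (c i - μ) := by
          rw [Finset.mul_sum, ← Finset.sum_sub_distrib]
          exact Finset.sum_congr rfl fun i _ => by ring
      _ = 0 := by rw [h₁, h₂, mul_zero, sub_zero]
  intro i hi
  have hterm := (Finset.sum_eq_zero_iff_of_nonneg fun j hj => by
    have := ht j hj; positivity).1 hsq i hi
  have hci : c i = μ := by
    simpa [sub_eq_zero, (ht i hi).ne'] using hterm
  rw [hc i hi, hci]

section AffineLift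

variable {𝕜 : Type*} {n : ℕ}

variable (𝕜 n) in
def affineLift [Ring 𝕜] : (Fin n → 𝕜) →ᵃ[𝕜] (Fin (n + 1) → 𝕜) where
  toFun x := Fin.cons 1 x
  linear := (Fin.consLinearEquiv 𝕜 fun _ => 𝕜).toLinearMap ∘ₗ LinearMap.inr 𝕜 𝕜 (Fin n → 𝕜)
  map_vadd' p v := by
    funext i
    refine Fin.cases ?_ (fun j => ?_) i <;> simp

theorem affineLift_apply [Ring 𝕜] (x : Fin n → 𝕜) :
    affineLift 𝕜 n x = (Fin.cons 1 x : Fin (n + 1) → 𝕜) := rfl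

theorem affineLift_sum [Ring 𝕜] {ι : Type*} {s : Finset ι} {w : ι → 𝕜}
    (hw : ∑ i ∈ s, w i = 1) (x : ι → Fin n → 𝕜) :
    affineLift 𝕜 n (∑ i ∈ s, w i • x i) = ∑ i ∈ s, w i • affineLift 𝕜 n (x i) := by
  funext j
  refine Fin.cases ?_ (fun j => ?_) j <;> simp [affineLift_apply, Finset.sum_apply, hw]

theorem span_affineLift_image_eq_top [Ring 𝕜] {S : Set (Fin n → 𝕜)}
    (hS : affineSpan 𝕜 S = ⊤) : Submodule.span 𝕜 (affineLift 𝕜 n '' S) = ⊤ := by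
  have hlift (x : Fin n → 𝕜) : affineLift 𝕜 n x ∈ Submodule.span 𝕜 (affineLift 𝕜 n '' S) := by
    apply affineSpan_subset_span
    rw [← AffineSubspace.map_span, hS]
    exact ⟨x, trivial, rfl⟩
  refine Submodule.eq_top_iff'.2 fun y => ?_
  have hy : y = y 0 • affineLift 𝕜 n 0 + (affineLift 𝕜 n (Fin.tail y) - affineLift 𝕜 n 0) := by
    funext i
    refine Fin.cases ?_ (fun j => ?_) i <;> simp [affineLift_apply, Fin.tail]
  rw [hy]
  exact add_mem (Submodule.smul_mem _ _ (hlift 0)) (sub_mem (hlift _) (hlift 0))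

theorem eq_smul_of_forall_affineLift_eq_smul [CommRing 𝕜] (f : Module.End 𝕜 (Fin (n + 1) → 𝕜))
    {S : Set (Fin n → 𝕜)} (hS : affineSpan 𝕜 S = ⊤) {μ : 𝕜}
    (h : ∀ v ∈ S, f (affineLift 𝕜 n v) = μ • affineLift 𝕜 n v) (x : Fin (n + 1) → 𝕜) :
    f x = μ • x := by
  have hle : Submodule.span 𝕜 (affineLift 𝕜 n '' S) ≤ f.eigenspace μ :=
    Submodule.span_le.2 <| by
      rintro _ ⟨v, hv, rfl⟩
      exact Module.End.mem_eigenspace_iff.2 (h v hv)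
  rw [span_affineLift_image_eq_top hS] at hle
  exact Module.End.mem_eigenspace_iff.1 (hle Submodule.mem_top)

end AffineLift

/-- Let `D` be a compact convex polytope (the convex hull of a finite
set) with nonempty interior in affine `n`-space `𝐀ⁿ ⊆ ℙⁿ`, and `q` an interior point of
`D`.  If a projective linear automorphism of `ℝPⁿ` fixes every vertex (extreme point)
of `D` and fixes `q`, then it is the identity. -/
theorem projective_automorphism_fixing_polytope_is_id
    (n : ℕ) (V : Finset (Fin n → ℝ))
    (q : Fin n → ℝ)
    (hq : q ∈ interior (convexHull ℝ (V : Set (Fin n → ℝ))))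
    (g : (Fin (n + 1) → ℝ) ≃ₗ[ℝ] (Fin (n + 1) → ℝ))
    (hfix : ∀ v ∈ Set.extremePoints ℝ (convexHull ℝ (V : Set (Fin n → ℝ))),
      Projectivization.map g.toLinearMap g.injective (projEmb n v) = projEmb n v)
    (hfixq : Projectivization.map g.toLinearMap g.injective (projEmb n q) = projEmb n q) :
    ∀ p : ℙ ℝ (Fin (n + 1) → ℝ),
      Projectivization.map g.toLinearMap g.injective p = p := by
  set S := (convexHull ℝ (V : Set (Fin n → ℝ))).extremePoints ℝ
  have hSfin : S.Finite := V.finite_toSet.subset extremePoints_convexHull_subset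
  have hqS : q ∈ interior (convexHull ℝ (hSfin.toFinset : Set (Fin n → ℝ))) := by
    rwa [hSfin.coe_toFinset, V.finite_toSet.convexHull_extremePoints_convexHull]
  have hspan : affineSpan ℝ S = ⊤ := by
    rw [← interior_convexHull_nonempty_iff_affineSpan_eq_top, ← hSfin.coe_toFinset]
    exact ⟨q, hqS⟩
  obtain ⟨t, ht, ht₁, htq⟩ := exists_pos_weights_of_mem_interior_convexHull hqS
  obtain ⟨μ, hμ⟩ := (Projectivization.map_mk_eq_mk_iff _ _ _ _).1 hfixq
  rw [← affineLift_apply (𝕜 := ℝ), ← htq, affineLift_sum ht₁] at hμ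
  have hS : ∀ v ∈ S, g (affineLift ℝ n v) = μ • affineLift ℝ n v := fun v hv =>
    eq_smul_of_pos_sum_eq_smul g.toLinearMap (LinearMap.proj 0) (fun _ _ => rfl)
      (fun v hv => (Projectivization.map_mk_eq_mk_iff _ _ _ _).1 (hfix v (by simpa using hv)))
      ht hμ v (by simpa using hv)
  have hg := eq_smul_of_forall_affineLift_eq_smul g.toLinearMap hspan hS
  intro p
  induction p using Projectivization.ind with
  | h v hv => exact (Projectivization.map_mk_eq_mk_iff _ _ _ _).2 ⟨μ, hg v⟩
end

section
/- Let $A, B \in \mathrm{GL}(r, \mathbb{Z})$, let $\mu \in \widehat{\mathbb{Z}}^{\times}$ be a unit of the profinite integers, and suppose $A$ is conjugate in $\mathrm{GL}(r, \widehat{\mathbb{Z}})$ to the $\mu$-th power $B^{\mu}$ of $B$. Set $a(t) = \det(1 - tA)$ and $b(t) = \det(1 - tB)$ in $\mathbb{Z}[t]$. Then the principal ideals $(a(t^{\mu}))$ and $(b(t))$ of the completed group algebra $\widehat{\mathbb{Z}}[[t^{\widehat{\mathbb{Z}}}]]$ are equal. -/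
/-- The transition ring homomorphisms of the inverse system of finite group algebras
`(ℤ/l)[t^{ℤ/d}]` (along the diagonal cofinal subsystem `l = d = n+1`). -/
noncomputable def GATrans (m n : ℕ) (h : (m + 1) ∣ (n + 1)) :
    MonoidAlgebra (ZMod (n + 1)) (Multiplicative (ZMod (n + 1))) →+*
      MonoidAlgebra (ZMod (m + 1)) (Multiplicative (ZMod (m + 1))) :=
  MonoidAlgebra.liftNCRingHom
    ((MonoidAlgebra.singleOneRingHom).comp (ZMod.castHom h (ZMod (m + 1))))
    ((MonoidAlgebra.of (ZMod (m + 1)) (Multiplicative (ZMod (m + 1)))).comp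
      (AddMonoidHom.toMultiplicative ((ZMod.castHom h (ZMod (m + 1))).toAddMonoidHom)))
    (fun _ _ => Commute.all _ _)

/-- Compatibility condition for the completed group algebra `ẑ[[t^ẑ]]`. -/
def GACompat (f : ∀ n : ℕ, MonoidAlgebra (ZMod (n + 1)) (Multiplicative (ZMod (n + 1)))) :
    Prop :=
  ∀ (m n : ℕ) (h : (m + 1) ∣ (n + 1)), GATrans m n h (f n) = f m

/-- The completed group algebra `ẑ[[t^ẑ]]`, realized as the inverse limit of the finite
group algebras `(ℤ/(n+1))[t^{ℤ/(n+1)}]`. -/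
noncomputable def GAHat :
    Subring (∀ n : ℕ, MonoidAlgebra (ZMod (n + 1)) (Multiplicative (ZMod (n + 1)))) where
  carrier := {f | GACompat f}
  zero_mem' := by intro m n h; simp only [Pi.zero_apply, map_zero]
  one_mem' := by intro m n h; simp only [Pi.one_apply, map_one]
  add_mem' := by
    intro a b ha hb m n h
    have ha' := (ha : GACompat a) m n h
    have hb' := (hb : GACompat b) m n h
    simp only [Pi.add_apply, map_add, ha', hb']
  mul_mem' := by
    intro a b ha hb m n h
    have ha' := (ha : GACompat a) m n h
    have hb' := (hb : GACompat b) m n h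
    simp only [Pi.mul_apply, map_mul, ha', hb']
  neg_mem' := by
    intro a ha m n h
    have ha' := (ha : GACompat a) m n h
    simp only [Pi.neg_apply, map_neg, ha']

/-- The reduction homomorphism `ẑ → ℤ/(n+1)`. -/
def projZ (n : ℕ) : ZHat →+* ZMod (n + 1) :=
  (Pi.evalRingHom (fun k => ZMod (k + 1)) n).comp ZHat.subtype

/-!
At level `n` the group algebra is `(ℤ/(n+1))[t^{ℤ/(n+1)}]`, `t^μ` becomes `t^k` for a natural
number `k ≡ μ`, and `A` becomes conjugate to `B^k`; so `a(t^μ)` reduces to `det(1 - X^k)` with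
`X = t • B`, while `b(t)` reduces to `det(1 - X)`. Now
`det(1 - X^k) = det(1 - X) · det(∑_{i<k} X^i)`, and for `k k' ≡ 1` modulo the order of `X`,
`det(1 - X) = det(1 - X^k) · det(∑_{i<k'} X^{ki})`.
Since `X` has finite order and `n + 1 = 0`, these geometric sums depend on `k` only modulo a fixed
modulus; taking `k` at every level as the residue of `μ` modulo a common multiple of the moduli of
all lower levels makes the cofactors compatible, i.e. elements of `ẑ[[t^ẑ]]`.
-/

open Finset

theorem geom_sum_range_add_mul_of_pow_eq_one {S : Type*} [Semiring S] {x : S} {L : ℕ}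
    (hx : x ^ L = 1) (a s : ℕ) :
    ∑ i ∈ range (a + s * L), x ^ i =
      ∑ i ∈ range a, x ^ i + s • (x ^ a * ∑ i ∈ range L, x ^ i) := by
  induction s with
  | zero => simp
  | succ s ih =>
    rw [Nat.succ_mul, ← add_assoc, sum_range_add, ih, succ_nsmul, add_assoc,
      mul_sum (s := range L)]
    congr 2
    refine sum_congr rfl fun i _ => ?_
    rw [pow_add, pow_add x a, pow_mul', hx, one_pow, mul_one]

theorem geom_sum_eq_of_modEq {S : Type*} [Semiring S] {x : S} {c L a b : ℕ} (hx : x ^ L = 1)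
    (hc : (c : S) = 0) (h : a ≡ b [MOD c * L]) :
    ∑ i ∈ range a, x ^ i = ∑ i ∈ range b, x ^ i := by
  wlog hab : a ≤ b generalizing a b
  · exact (this h.symm (le_of_not_ge hab)).symm
  obtain ⟨s, hs⟩ := (Nat.modEq_iff_dvd' hab).mp h
  rw [show b = a + (s * c) * L by rw [mul_comm s, mul_right_comm]; omega,
    geom_sum_range_add_mul_of_pow_eq_one hx, mul_nsmul', nsmul_eq_mul (n := c), hc, zero_mul,
    smul_zero, add_zero]

theorem Matrix.det_one_sub_smul_eq_of_mul_eq_mul {n R : Type*} [Fintype n] [DecidableEq n]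
    [CommRing R] {U : (Matrix n n R)ˣ} {A C : Matrix n n R} (h : U.val * A = C * U.val) (s : R) :
    (1 - s • A).det = (1 - s • C).det := by
  have hconj : U.val * (1 - s • A) = (1 - s • C) * U.val := by
    rw [mul_sub, sub_mul, mul_one, one_mul, mul_smul_comm, h, smul_mul_assoc]
  have hdet := congrArg Matrix.det hconj
  rw [det_mul, det_mul, mul_comm (det (1 - s • C))] at hdet
  exact (isUnits_det_units U).mul_left_cancel hdet

theorem Matrix.pow_card_generalLinearGroup_eq_one {n R : Type*} [Fintype n] [DecidableEq n]
    [CommRing R] {M : Matrix n n R} (h : IsUnit M.det) :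
    M ^ Nat.card (GeneralLinearGroup n R) = 1 := by
  obtain ⟨u, rfl⟩ := (isUnit_iff_isUnit_det M).mpr h
  rw [← Units.val_pow_eq_pow_val, pow_card_eq_one', Units.val_one]

open Polynomial in
theorem Polynomial.aeval_det_one_sub_X_smul_map_C {n R S : Type*} [Fintype n] [DecidableEq n]
    [CommRing R] [CommRing S] [Algebra R S] (M : Matrix n n R) (s : S) :
    aeval s (1 - (X : Polynomial R) • M.map (fun z => C z)).det =
      (1 - s • M.map (algebraMap R S)).det := by
  rw [AlgHom.map_det, map_sub, map_one]
  congr 2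
  ext i j
  simp only [AlgHom.mapMatrix_apply, Matrix.map_apply, Matrix.smul_apply, smul_eq_mul, map_mul,
    aeval_X, aeval_C]

namespace ZHat

theorem natCast_val_projZ (z : ZHat) {d a : ℕ} (h : d + 1 ∣ a + 1) :
    ((projZ a z).val : ZMod (d + 1)) = projZ d z := by
  rw [ZMod.natCast_val]
  exact z.2 d a h

theorem val_projZ_modEq (z : ZHat) {d a b : ℕ} (ha : d ∣ a + 1) (hb : d ∣ b + 1) :
    (projZ a z).val ≡ (projZ b z).val [MOD d] := by
  obtain ⟨d, rfl⟩ := Nat.exists_eq_succ_of_ne_zero (ne_zero_of_dvd_ne_zero a.succ_ne_zero ha)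
  rw [← ZMod.natCast_eq_natCast_iff, natCast_val_projZ z ha, natCast_val_projZ z hb]

theorem natCast_dvd_of_projZ_eq_zero {z : ZHat} {d : ℕ} (h : projZ d z = 0) :
    ((d + 1 : ℕ) : ZHat) ∣ z := by
  -- the quotient is read off at level `l * (d + 1) + d`, i.e. modulo `(l + 1) * (d + 1)`
  have hlevel : ∀ l, l * (d + 1) + d + 1 = (l + 1) * (d + 1) := fun l => by ring
  set v : ℕ → ℕ := fun l => (projZ (l * (d + 1) + d) z).val
  have hv : ∀ l, d + 1 ∣ v l := fun l => by
    rw [← ZMod.natCast_eq_zero_iff,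
      natCast_val_projZ z (by rw [hlevel]; exact dvd_mul_left _ _), h]
  have hw : ZHatCompat fun l => ((v l / (d + 1) : ℕ) : ZMod (l + 1)) := by
    intro m n hmn
    rw [map_natCast, ZMod.natCast_eq_natCast_iff]
    have hmod : v n ≡ v m [MOD (d + 1) * (m + 1)] := val_projZ_modEq z
      (by rw [hlevel, mul_comm]; exact mul_dvd_mul_right hmn _) (by rw [hlevel, mul_comm])
    obtain ⟨a, ha⟩ := hv n
    obtain ⟨b, hb⟩ := hv m
    rw [ha, hb] at hmod ⊢
    rw [Nat.mul_div_cancel_left a d.succ_pos, Nat.mul_div_cancel_left b d.succ_pos]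
    exact Nat.ModEq.mul_left_cancel' d.succ_ne_zero hmod
  refine ⟨⟨_, hw⟩, Subtype.ext (funext fun l => ?_)⟩
  change projZ l z = ((d + 1 : ℕ) : ZMod (l + 1)) * ((v l / (d + 1) : ℕ) : ZMod (l + 1))
  rw [← Nat.cast_mul, Nat.mul_div_cancel' (hv l),
    natCast_val_projZ z (by rw [hlevel]; exact dvd_mul_right _ _)]

theorem natCast_dvd_sub_val_projZ (z : ZHat) {d a : ℕ} (h : d ∣ a + 1) :
    (d : ZHat) ∣ z - ((projZ a z).val : ZHat) := by
  obtain ⟨d, rfl⟩ := Nat.exists_eq_succ_of_ne_zero (ne_zero_of_dvd_ne_zero a.succ_ne_zero h)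
  refine natCast_dvd_of_projZ_eq_zero ?_
  rw [map_sub, map_natCast, natCast_val_projZ z h, sub_self]

theorem val_projZ_mul_val_projZ_inv_modEq (μ : ZHatˣ) (a : ℕ) :
    (projZ a μ).val * (projZ a ↑μ⁻¹).val ≡ 1 [MOD a + 1] := by
  rw [← ZMod.natCast_eq_natCast_iff, Nat.cast_mul, ZMod.natCast_zmod_val, ZMod.natCast_zmod_val,
    ← map_mul, Units.mul_inv, map_one, Nat.cast_one]

end ZHat

noncomputable abbrev glCard (r n : ℕ) : ℕ :=
  Nat.card (Matrix.GeneralLinearGroup (Fin r) (ZMod (n + 1)))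

/-- At level `m` the matrix `t • B` has order dividing `(m + 1) * glCard r m`, and an extra factor
`m + 1` kills the characteristic; `levelModulus r n` is a multiple of these moduli for all
`m ≤ n`. -/
noncomputable def levelModulus (r n : ℕ) : ℕ :=
  ∏ j ∈ range (n + 1), (j + 1) * ((j + 1) * glCard r j)

theorem levelModulus_pos (r n : ℕ) : 0 < levelModulus r n :=
  prod_pos fun j _ => Nat.mul_pos j.succ_pos (Nat.mul_pos j.succ_pos Nat.card_pos)

theorem dvd_levelModulus (r : ℕ) {m n : ℕ} (h : m ≤ n) :
    (m + 1) * ((m + 1) * glCard r m) ∣ levelModulus r n :=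
  dvd_prod_of_mem _ (mem_range.mpr (Nat.lt_succ_of_le h))

/-- The representative in `[0, levelModulus r n)` of `z`. -/
noncomputable def levelExp (r : ℕ) (z : ZHat) (n : ℕ) : ℕ :=
  (projZ (levelModulus r n - 1) z).val

theorem dvd_levelModulus_sub_one_add_one (r : ℕ) {d n : ℕ} (h : d ∣ levelModulus r n) :
    d ∣ levelModulus r n - 1 + 1 := by
  rwa [Nat.sub_add_cancel (levelModulus_pos r n)]

theorem levelExp_modEq (r : ℕ) (z : ZHat) {m n : ℕ} (h : m + 1 ∣ n + 1) :
    levelExp r z n ≡ levelExp r z m [MOD (m + 1) * ((m + 1) * glCard r m)] :=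
  ZHat.val_projZ_modEq z
    (dvd_levelModulus_sub_one_add_one r
      (dvd_levelModulus r (Nat.le_of_succ_le_succ (Nat.le_of_dvd n.succ_pos h))))
    (dvd_levelModulus_sub_one_add_one r (dvd_levelModulus r le_rfl))

theorem natCast_levelExp (r : ℕ) (z : ZHat) (n : ℕ) :
    (levelExp r z n : ZMod (n + 1)) = projZ n z :=
  ZHat.natCast_val_projZ z (dvd_levelModulus_sub_one_add_one r
    ((dvd_mul_right _ _).trans (dvd_levelModulus r le_rfl)))

theorem glCard_dvd_sub_levelExp (r : ℕ) (z : ZHat) (n : ℕ) :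
    (glCard r n : ZHat) ∣ z - (levelExp r z n : ZHat) :=
  ZHat.natCast_dvd_sub_val_projZ z (dvd_levelModulus_sub_one_add_one r
    ((dvd_mul_left _ _).trans ((dvd_mul_left _ _).trans (dvd_levelModulus r le_rfl))))

theorem levelExp_mul_levelExp_inv_modEq (r : ℕ) (μ : ZHatˣ) (n : ℕ) :
    levelExp r μ n * levelExp r ↑μ⁻¹ n ≡ 1 [MOD (n + 1) * glCard r n] :=
  (ZHat.val_projZ_mul_val_projZ_inv_modEq μ _).of_dvd
    (dvd_levelModulus_sub_one_add_one r ((dvd_mul_left _ _).trans (dvd_levelModulus r le_rfl)))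

abbrev GALevel (n : ℕ) : Type := MonoidAlgebra (ZMod (n + 1)) (Multiplicative (ZMod (n + 1)))

namespace GALevel

noncomputable def gen (n : ℕ) : GALevel n := MonoidAlgebra.of _ _ (Multiplicative.ofAdd 1)

theorem gen_pow (n k : ℕ) :
    gen n ^ k = MonoidAlgebra.of _ _ (Multiplicative.ofAdd (k : ZMod (n + 1))) := by
  rw [gen, ← map_pow, ← ofAdd_nsmul, nsmul_one]

theorem gen_pow_succ (n : ℕ) : gen n ^ (n + 1) = 1 := by
  rw [gen_pow, ZMod.natCast_self, ofAdd_zero, map_one]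

theorem gaTrans_gen {m n : ℕ} (h : m + 1 ∣ n + 1) : GATrans m n h (gen n) = gen m := by
  simp [gen, GATrans, MonoidAlgebra.liftNCRingHom, MonoidAlgebra.singleOneRingHom,
    MonoidAlgebra.liftNC_single, ZMod.cast_one h]

theorem natCast_succ_eq_zero (r n : ℕ) :
    ((n + 1 : ℕ) : Matrix (Fin r) (Fin r) (GALevel n)) = 0 := by
  rw [← map_natCast (algebraMap (ZMod (n + 1)) _), ZMod.natCast_self, map_zero]

theorem map_intCast_map_singleOneRingHom {r : ℕ} (B : Matrix (Fin r) (Fin r) ℤ) (n : ℕ) :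
    (B.map (fun z => (z : ZMod (n + 1)))).map MonoidAlgebra.singleOneRingHom =
      B.map (fun z => (z : GALevel n)) := by
  rw [Matrix.map_map]
  exact congrArg _ (funext fun z => map_intCast _ z)

noncomputable def genSmul {r : ℕ} (B : Matrix (Fin r) (Fin r) ℤ) (n : ℕ) :
    Matrix (Fin r) (Fin r) (GALevel n) :=
  gen n • B.map (fun z => (z : GALevel n))

theorem genSmul_pow_eq_one {r : ℕ} {B : Matrix (Fin r) (Fin r) ℤ} (hB : IsUnit B.det)
    (n : ℕ) :
    genSmul B n ^ ((n + 1) * glCard r n) = 1 := by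
  have hBn : (B.map (fun z => (z : ZMod (n + 1)))) ^ glCard r n = 1 :=
    Matrix.pow_card_generalLinearGroup_eq_one (by
      rw [← Int.coe_castRingHom, ← RingHom.mapMatrix_apply, ← RingHom.map_det]
      exact hB.map _)
  rw [genSmul, smul_pow, pow_mul, gen_pow_succ, one_pow, one_smul, pow_mul',
    ← map_intCast_map_singleOneRingHom, ← RingHom.mapMatrix_apply, ← map_pow, hBn, map_one,
    one_pow]

theorem map_gaTrans_genSmul {r : ℕ} (B : Matrix (Fin r) (Fin r) ℤ) {m n : ℕ}
    (h : m + 1 ∣ n + 1) : (genSmul B n).map (GATrans m n h) = genSmul B m := by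
  ext i j
  simp only [genSmul, Matrix.map_apply, Matrix.smul_apply, smul_eq_mul, map_mul, gaTrans_gen,
    map_intCast]

theorem map_gaTrans_genSmul_pow_levelExp {r : ℕ} {B : Matrix (Fin r) (Fin r) ℤ}
    (hB : IsUnit B.det) (z : ZHat) {m n : ℕ} (h : m + 1 ∣ n + 1) :
    (genSmul B n ^ levelExp r z n).map (GATrans m n h) = genSmul B m ^ levelExp r z m := by
  rw [← RingHom.mapMatrix_apply, map_pow, RingHom.mapMatrix_apply, map_gaTrans_genSmul]
  exact pow_eq_pow_of_modEq ((levelExp_modEq r z h).of_dvd (dvd_mul_left _ _))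
    (genSmul_pow_eq_one hB m)

end GALevel

namespace GAHat

noncomputable def proj (n : ℕ) : GAHat →+* GALevel n :=
  (Pi.evalRingHom GALevel n).comp GAHat.subtype

theorem dvd_of_proj_eq_mul {x y : GAHat} {f : ∀ n, GALevel n} (hf : GACompat f)
    (h : ∀ n, proj n x = proj n y * f n) : y ∣ x :=
  ⟨⟨f, hf⟩, Subtype.ext (funext h)⟩

theorem gaCompat_det_geom_sum {r : ℕ} {Y : ∀ n, Matrix (Fin r) (Fin r) (GALevel n)}
    {L k : ℕ → ℕ} (hY : ∀ n, Y n ^ L n = 1)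
    (hYmap : ∀ m n (h : m + 1 ∣ n + 1), (Y n).map (GATrans m n h) = Y m)
    (hk : ∀ m n, m + 1 ∣ n + 1 → k n ≡ k m [MOD (m + 1) * L m]) :
    GACompat fun n => (∑ i ∈ range (k n), Y n ^ i).det := by
  intro m n h
  rw [RingHom.map_det, map_sum]
  simp only [map_pow, RingHom.mapMatrix_apply, hYmap]
  exact congrArg _ (geom_sum_eq_of_modEq (hY m) (GALevel.natCast_succ_eq_zero r m) (hk m n h))

theorem proj_aeval_det_one_sub_X_smul {r : ℕ} (t : GAHat) (M : Matrix (Fin r) (Fin r) ℤ)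
    (n : ℕ) :
    proj n (Polynomial.aeval t
        ((1 - (Polynomial.X : Polynomial ℤ) • M.map (fun z => Polynomial.C z)).det)) =
      (1 - proj n t • M.map (fun z => (z : GALevel n))).det := by
  rw [← RingHom.toIntAlgHom_apply, ← Polynomial.aeval_algHom_apply,
    Polynomial.aeval_det_one_sub_X_smul_map_C, RingHom.toIntAlgHom_apply]
  congr

theorem proj_aeval_det_of_conj {r : ℕ} {A B : Matrix (Fin r) (Fin r) ℤ}
    {C : Matrix (Fin r) (Fin r) ZHat} {U : (Matrix (Fin r) (Fin r) ZHat)ˣ}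
    (hU : U.val * A.map (fun z => (z : ZHat)) = C * U.val) {n k : ℕ}
    (hC : C.map (fun x => projZ n x) = (B.map (fun z => (z : ZMod (n + 1)))) ^ k)
    {t : GAHat} (ht : proj n t = GALevel.gen n ^ k) :
    proj n (Polynomial.aeval t
        ((1 - (Polynomial.X : Polynomial ℤ) • A.map (fun z => Polynomial.C z)).det)) =
      (1 - GALevel.genSmul B n ^ k).det := by
  let φ : ZHat →+* GALevel n := MonoidAlgebra.singleOneRingHom.comp (projZ n)
  let ρ : Matrix (Fin r) (Fin r) ZHat →+* Matrix (Fin r) (Fin r) (GALevel n) := φ.mapMatrix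
  have hUn : (Units.map ρ.toMonoidHom U).val * A.map (fun z => (z : GALevel n)) =
      (B.map (fun z => (z : GALevel n))) ^ k * (Units.map ρ.toMonoidHom U).val := by
    have hρA : ρ (A.map (fun z => (z : ZHat))) = A.map (fun z => (z : GALevel n)) := by
      ext i j : 1
      exact map_intCast φ (A i j)
    have hρC : ρ C = (B.map (fun z => (z : GALevel n))) ^ k := by
      rw [← GALevel.map_intCast_map_singleOneRingHom, ← RingHom.mapMatrix_apply, ← map_pow,
        ← hC]
      rfl
    have hUρ := congrArg ρ hU
    rwa [map_mul, map_mul, hρA, hρC] at hUρ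
  rw [proj_aeval_det_one_sub_X_smul, ht, Matrix.det_one_sub_smul_eq_of_mul_eq_mul hUn,
    GALevel.genSmul, smul_pow]

end GAHat

theorem charpoly_ideal_eq_of_conj_mu_power_general
    (r : ℕ) (A B : Matrix (Fin r) (Fin r) ℤ)
    (hB : IsUnit B.det)
    (μ : ZHatˣ)
    (C : Matrix (Fin r) (Fin r) ZHat)
    (hC : ∀ n k : ℕ,
      ((Nat.card (Matrix.GeneralLinearGroup (Fin r) (ZMod (n + 1))) : ZHat)) ∣
          ((μ : ZHat) - (k : ZHat)) →
        C.map (fun x => projZ n x) = (B.map (fun z => (z : ZMod (n + 1)))) ^ k)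
    (hconj : ∃ U : (Matrix (Fin r) (Fin r) ZHat)ˣ,
      U.val * (A.map (fun z => (z : ZHat))) = C * U.val)
    (tμ tOne : GAHat)
    (htμ : ∀ n : ℕ,
      (tμ : ∀ n : ℕ, MonoidAlgebra (ZMod (n + 1)) (Multiplicative (ZMod (n + 1)))) n =
        MonoidAlgebra.of (ZMod (n + 1)) (Multiplicative (ZMod (n + 1)))
          (Multiplicative.ofAdd (((μ : ZHat) : ∀ n : ℕ, ZMod (n + 1)) n)))
    (htOne : ∀ n : ℕ,
      (tOne : ∀ n : ℕ, MonoidAlgebra (ZMod (n + 1)) (Multiplicative (ZMod (n + 1)))) n =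
        MonoidAlgebra.of (ZMod (n + 1)) (Multiplicative (ZMod (n + 1)))
          (Multiplicative.ofAdd (1 : ZMod (n + 1)))) :
    Ideal.span {Polynomial.aeval tμ
        ((1 - (Polynomial.X : Polynomial ℤ) • A.map (fun z => Polynomial.C z)).det)} =
      Ideal.span {Polynomial.aeval tOne
        ((1 - (Polynomial.X : Polynomial ℤ) • B.map (fun z => Polynomial.C z)).det)} := by
  obtain ⟨U, hU⟩ := hconj
  set k := levelExp r μ
  have ha : ∀ n, GAHat.proj n (Polynomial.aeval tμ
      ((1 - (Polynomial.X : Polynomial ℤ) • A.map (fun z => Polynomial.C z)).det)) =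
        (1 - GALevel.genSmul B n ^ k n).det := fun n =>
    GAHat.proj_aeval_det_of_conj hU (hC n (k n) (glCard_dvd_sub_levelExp r μ n))
      (by rw [GALevel.gen_pow, natCast_levelExp]; exact htμ n)
  have hb : ∀ n, GAHat.proj n (Polynomial.aeval tOne
      ((1 - (Polynomial.X : Polynomial ℤ) • B.map (fun z => Polynomial.C z)).det)) =
        (1 - GALevel.genSmul B n).det := fun n => by
    rw [GAHat.proj_aeval_det_one_sub_X_smul, show GAHat.proj n tOne = GALevel.gen n from htOne n]
    rfl
  apply le_antisymm <;> rw [Ideal.span_singleton_le_span_singleton]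
  · refine GAHat.dvd_of_proj_eq_mul (GAHat.gaCompat_det_geom_sum (GALevel.genSmul_pow_eq_one hB)
      (fun m n h => GALevel.map_gaTrans_genSmul B h) fun m n h => levelExp_modEq r μ h)
      fun n => ?_
    rw [ha, hb, ← Matrix.det_mul, mul_neg_geom_sum]
  · refine GAHat.dvd_of_proj_eq_mul (GAHat.gaCompat_det_geom_sum
      (fun n => by rw [← pow_mul, mul_comm, pow_mul, GALevel.genSmul_pow_eq_one hB, one_pow])
      (fun m n h => GALevel.map_gaTrans_genSmul_pow_levelExp hB μ h)
      fun m n h => levelExp_modEq r ↑μ⁻¹ h) fun n => ?_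
    rw [ha, hb, ← Matrix.det_mul, mul_neg_geom_sum, ← pow_mul,
      pow_eq_pow_of_modEq (levelExp_mul_levelExp_inv_modEq r μ n)
        (GALevel.genSmul_pow_eq_one hB n), pow_one]

/-- Let `A, B ∈ GL(r, ℤ)`, let `μ ∈ ẑˣ`, and suppose `A` is conjugate
in `GL(r, ẑ)` to the `μ`-th power `C = B^μ` of `B` (characterized by: every reduction of
`C` mod `n+1` is `B^k` for any natural `k ≡ μ` modulo the order of `GL(r, ℤ/(n+1))`).
Let `a(t) = det(1 - tA)` and `b(t) = det(1 - tB)`.  Then the principal ideals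
`(a(t^μ))` and `(b(t))` of the completed group algebra `ẑ[[t^ẑ]]` coincide, where `t^μ`
and `t` denote the group-like elements of `ẑ[[t^ẑ]]` with exponents `μ` and `1`. -/
theorem charpoly_ideal_eq_of_conj_mu_power
    (r : ℕ) (A B : Matrix (Fin r) (Fin r) ℤ)
    (hA : IsUnit A.det) (hB : IsUnit B.det)
    (μ : ZHatˣ)
    (C : Matrix (Fin r) (Fin r) ZHat)
    (hC : ∀ n k : ℕ,
      ((Nat.card (Matrix.GeneralLinearGroup (Fin r) (ZMod (n + 1))) : ZHat)) ∣
          ((μ : ZHat) - (k : ZHat)) →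
        C.map (fun x => projZ n x) = (B.map (fun z => (z : ZMod (n + 1)))) ^ k)
    (hconj : ∃ U : (Matrix (Fin r) (Fin r) ZHat)ˣ,
      U.val * (A.map (fun z => (z : ZHat))) = C * U.val)
    (tμ tOne : GAHat)
    (htμ : ∀ n : ℕ,
      (tμ : ∀ n : ℕ, MonoidAlgebra (ZMod (n + 1)) (Multiplicative (ZMod (n + 1)))) n =
        MonoidAlgebra.of (ZMod (n + 1)) (Multiplicative (ZMod (n + 1)))
          (Multiplicative.ofAdd (((μ : ZHat) : ∀ n : ℕ, ZMod (n + 1)) n)))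
    (htOne : ∀ n : ℕ,
      (tOne : ∀ n : ℕ, MonoidAlgebra (ZMod (n + 1)) (Multiplicative (ZMod (n + 1)))) n =
        MonoidAlgebra.of (ZMod (n + 1)) (Multiplicative (ZMod (n + 1)))
          (Multiplicative.ofAdd (1 : ZMod (n + 1)))) :
    Ideal.span {Polynomial.aeval tμ
        ((1 - (Polynomial.X : Polynomial ℤ) • A.map (fun z => Polynomial.C z)).det)} =
      Ideal.span {Polynomial.aeval tOne
        ((1 - (Polynomial.X : Polynomial ℤ) • B.map (fun z => Polynomial.C z)).det)} :=
  charpoly_ideal_eq_of_conj_mu_power_general r A B hB μ C hC hconj tμ tOne htμ htOne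
end
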